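/- arXiv:2105.09486 — 2 statements merged into one kernel-verified Lean document; each statement's English description precedes it below -/
import Mathlib

section
/- Let k be an algebraically closed field of characteristic not 2 or 3, and let SL_2(k) act on binary cubic forms by substitution. The stabilizer of v = xy(x-y) in SL_2(k) is a cyclic group of order 3. -/
open MvPolynomial

/-- The substitution action of `SL₂(k)` on polynomials in two variables:
`(g · f)(x) = f(g⁻¹ x)`. -/
noncomputable def cubicAct {k : Type*} [Field k] (g : Matrix.SpecialLinearGroup (Fin 2) k)
    (f : MvPolynomial (Fin 2) k) : MvPolynomial (Fin 2) k :=
  MvPolynomial.bind₁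
    (fun i => ∑ j : Fin 2, MvPolynomial.C ((↑(g⁻¹) : Matrix (Fin 2) (Fin 2) k) i j) *
      MvPolynomial.X j) f

lemma cubicAct_expand {k : Type*} [Field k] (g : Matrix.SpecialLinearGroup (Fin 2) k)
    (a b c d : k) (hm : (↑(g⁻¹) : Matrix (Fin 2) (Fin 2) k) = !![a, b; c, d]) :
    cubicAct g ((X 0 : MvPolynomial (Fin 2) k) ^ 2 * X 1 - X 0 * (X 1) ^ 2) =
      (C a * X 0 + C b * X 1) ^ 2 * (C c * X 0 + C d * X 1)
        - (C a * X 0 + C b * X 1) * (C c * X 0 + C d * X 1) ^ 2 := by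
  simp [cubicAct, hm, Fin.sum_univ_two]

lemma eval_key {k : Type*} [Field k] (a b c d : k)
    (h : (C a * X 0 + C b * X 1) ^ 2 * (C c * X 0 + C d * X 1)
        - (C a * X 0 + C b * X 1) * (C c * X 0 + C d * X 1) ^ 2
        = ((X 0 : MvPolynomial (Fin 2) k)) ^ 2 * X 1 - X 0 * (X 1) ^ 2) (s t : k) :
    (a*s+b*t)^2*(c*s+d*t) - (a*s+b*t)*(c*s+d*t)^2 = s^2*t - s*t^2 := by
  have := congrArg (eval ![s, t]) h
  simpa using this

lemma solve_cubic {k : Type*} [Field k] (h2 : (2 : k) ≠ 0) (a b c d : k)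
    (hdet : a*d - b*c = 1)
    (E10 : a^2*c - a*c^2 = 0) (E01 : b^2*d - b*d^2 = 0)
    (hc21 : a*c*(b-d) + (a*d+b*c)*(a-c) = 1)
    (hc12 : (a*d+b*c)*(b-d) + b*d*(a-c) = -1) :
    (a = 1 ∧ b = 0 ∧ c = 0 ∧ d = 1) ∨ (a = 0 ∧ b = -1 ∧ c = 1 ∧ d = -1) ∨
      (a = -1 ∧ b = 1 ∧ c = -1 ∧ d = 0) := by
  have hE10 : a * (c * (a - c)) = 0 := by linear_combination E10
  have hE01 : b * (d * (b - d)) = 0 := by linear_combination E01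
  rcases mul_eq_zero.mp hE10 with ha | h'
  · subst ha
    rcases mul_eq_zero.mp hE01 with hb | h''
    · subst hb
      exfalso
      exact one_ne_zero (by linear_combination -hdet : (1:k) = 0)
    · rcases mul_eq_zero.mp h'' with hd | hbd
      · subst hd
        exfalso
        have hb1 : b = 1 := by linear_combination -hc12 - b*hdet
        have hc1 : c = 1 := by linear_combination hc21 - c*hdet
        subst hb1; subst hc1
        exact h2 (by linear_combination -hdet)
      · have hbd' : b = d := sub_eq_zero.mp hbd
        subst hbd'
        have hc1 : c = 1 := by linear_combination hc21 - c*hdet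
        subst hc1
        have hd1 : b = -1 := by linear_combination -hdet
        exact Or.inr (Or.inl ⟨rfl, hd1, rfl, hd1⟩)
  · rcases mul_eq_zero.mp h' with hc | hac
    · subst hc
      rcases mul_eq_zero.mp hE01 with hb | h''
      · subst hb
        have ha1 : a = 1 := by linear_combination hc21 - a*hdet
        subst ha1
        have hd1 : d = 1 := by linear_combination hdet
        exact Or.inl ⟨rfl, rfl, rfl, hd1⟩
      · rcases mul_eq_zero.mp h'' with hd | hbd
        · subst hd
          exfalso
          exact one_ne_zero (by linear_combination -hdet : (1:k) = 0)
        · have hbd' : b = d := sub_eq_zero.mp hbd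
          subst hbd'
          exfalso
          have ha1 : a = 1 := by linear_combination hc21 - a*hdet
          subst ha1
          have hd1 : b = 1 := by linear_combination hdet
          subst hd1
          exact h2 (by linear_combination hc12)
    · have hac' : a = c := sub_eq_zero.mp hac
      subst hac'
      rcases mul_eq_zero.mp hE01 with hb | h''
      · subst hb
        exfalso
        have ha1 : a = -1 := by linear_combination -hc21 - a*hdet
        subst ha1
        have hd1 : d = -1 := by linear_combination -hdet
        subst hd1
        exact h2 (by linear_combination hc12)
      · rcases mul_eq_zero.mp h'' with hd | hbd
        · subst hd
          have hb1 : b = 1 := by linear_combination -hc12 - b*hdet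
          subst hb1
          have ha1 : a = -1 := by linear_combination -hdet
          exact Or.inr (Or.inr ⟨ha1, rfl, ha1, rfl⟩)
        · have hbd' : b = d := sub_eq_zero.mp hbd
          subst hbd'
          exfalso
          exact one_ne_zero (by linear_combination -hdet : (1:k) = 0)

/-- The stabilizer in `SL₂(k)` of the binary cubic `v = xy(x-y) = x²y - xy²`
is a cyclic group of order 3 (`char k ≠ 2, 3`). -/
theorem stmt1 {k : Type*} [Field k] [IsAlgClosed k] (h2 : (2 : k) ≠ 0) (h3 : (3 : k) ≠ 0) :
    ∃ g₀ : Matrix.SpecialLinearGroup (Fin 2) k,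
      orderOf g₀ = 3 ∧
      ∀ g : Matrix.SpecialLinearGroup (Fin 2) k,
        cubicAct g ((X 0) ^ 2 * X 1 - X 0 * (X 1) ^ 2) =
          (X 0) ^ 2 * X 1 - X 0 * (X 1) ^ 2 ↔
        (g = 1 ∨ g = g₀ ∨ g = g₀ ^ 2) := by
  have hdetA : (!![(0:k), -1; 1, -1]).det = 1 := by norm_num [Matrix.det_fin_two]
  set g₀ : Matrix.SpecialLinearGroup (Fin 2) k := ⟨!![(0:k), -1; 1, -1], hdetA⟩ with hg₀
  have hcoe : (↑g₀ : Matrix (Fin 2) (Fin 2) k) = !![(0:k), -1; 1, -1] := rfl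
  have hsq : (↑(g₀ ^ 2) : Matrix (Fin 2) (Fin 2) k) = !![(-1:k), 1; -1, 0] := by
    rw [pow_two, Matrix.SpecialLinearGroup.coe_mul, hcoe]
    norm_num [Matrix.mul_fin_two]
  have hcube : g₀ ^ 3 = 1 := by
    apply Subtype.ext
    show (↑(g₀ ^ 3) : Matrix (Fin 2) (Fin 2) k) = _
    rw [pow_succ, Matrix.SpecialLinearGroup.coe_mul, hsq, hcoe,
      Matrix.SpecialLinearGroup.coe_one]
    norm_num [Matrix.mul_fin_two]
    exact Matrix.one_fin_two.symm
  have hne : g₀ ≠ 1 := by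
    intro h
    have h10 := congrArg (fun x : Matrix.SpecialLinearGroup (Fin 2) k =>
      (↑x : Matrix (Fin 2) (Fin 2) k) 1 0) h
    simp [hcoe, Matrix.SpecialLinearGroup.coe_one, Matrix.one_apply] at h10
  have hinv : g₀⁻¹ = g₀ ^ 2 := by
    symm
    exact eq_inv_of_mul_eq_one_left (by rw [← pow_succ]; exact hcube)
  have hinv2 : (g₀ ^ 2)⁻¹ = g₀ := inv_eq_of_mul_eq_one_right (by rw [← pow_succ]; exact hcube)
  have hcoeinv : (↑(g₀⁻¹) : Matrix (Fin 2) (Fin 2) k) = !![(-1:k), 1; -1, 0] := by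
    rw [hinv, hsq]
  have hcoeinv2 : (↑((g₀ ^ 2)⁻¹) : Matrix (Fin 2) (Fin 2) k) = !![(0:k), -1; 1, -1] := by
    rw [hinv2, hcoe]
  refine ⟨g₀, ?_, ?_⟩
  · haveI : Fact (Nat.Prime 3) := ⟨by norm_num⟩
    exact orderOf_eq_prime hcube hne
  · intro g
    constructor
    · intro hg
      set m : Matrix (Fin 2) (Fin 2) k := (↑(g⁻¹) : Matrix (Fin 2) (Fin 2) k) with hmdef
      set a := m 0 0 with hadef
      set b := m 0 1 with hbdef
      set c := m 1 0 with hcdef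
      set d := m 1 1 with hddef
      have hm : m = !![a, b; c, d] := Matrix.eta_fin_two m
      have hdetg : a * d - b * c = 1 := by
        have h := (g⁻¹).prop
        rw [Matrix.det_fin_two] at h
        exact h
      have hpoly := (cubicAct_expand g a b c d hm).symm.trans hg
      have key := eval_key a b c d hpoly
      have E10 : a^2*c - a*c^2 = 0 := by linear_combination key 1 0
      have E01 : b^2*d - b*d^2 = 0 := by linear_combination key 0 1
      have hsum : (a*c*(b-d) + (a*d+b*c)*(a-c)) + ((a*d+b*c)*(b-d) + b*d*(a-c)) = 0 := by
        linear_combination key 1 1 - key 1 0 - key 0 1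
      have hdiff : (a*c*(b-d) + (a*d+b*c)*(a-c)) - ((a*d+b*c)*(b-d) + b*d*(a-c)) = 2 := by
        linear_combination key 1 0 - key 0 1 - key 1 (-1)
      have hc21 : a*c*(b-d) + (a*d+b*c)*(a-c) = 1 :=
        mul_left_cancel₀ h2 (by linear_combination hsum + hdiff)
      have hc12 : (a*d+b*c)*(b-d) + b*d*(a-c) = -1 :=
        mul_left_cancel₀ h2 (by linear_combination hsum - hdiff)
      rcases solve_cubic h2 a b c d hdetg E10 E01 hc21 hc12 with
        ⟨u1, u2, u3, u4⟩ | ⟨u1, u2, u3, u4⟩ | ⟨u1, u2, u3, u4⟩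
      · left
        have hg1 : g⁻¹ = 1 := by
          apply Subtype.ext
          rw [Matrix.SpecialLinearGroup.coe_one]
          show m = _
          rw [hm, u1, u2, u3, u4, Matrix.one_fin_two]
        exact inv_eq_one.mp hg1
      · right; right
        have hg1 : g⁻¹ = g₀ := by
          apply Subtype.ext
          rw [hcoe]
          show m = _
          rw [hm, u1, u2, u3, u4]
        rw [inv_eq_iff_eq_inv.mp hg1, hinv]
      · right; left
        have hg1 : g⁻¹ = g₀ ^ 2 := by
          apply Subtype.ext
          rw [hsq]
          show m = _
          rw [hm, u1, u2, u3, u4]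
        rw [inv_eq_iff_eq_inv.mp hg1, hinv2]
    · rintro (rfl | rfl | rfl)
      · have hm1 : (↑((1 : Matrix.SpecialLinearGroup (Fin 2) k)⁻¹) :
            Matrix (Fin 2) (Fin 2) k) = !![(1:k), 0; 0, 1] := by
          rw [inv_one, Matrix.SpecialLinearGroup.coe_one, Matrix.one_fin_two]
        rw [cubicAct_expand 1 1 0 0 1 hm1]
        simp only [map_one, map_zero]
        ring
      · rw [cubicAct_expand g₀ (-1) 1 (-1) 0 hcoeinv]
        simp only [map_neg, map_one, map_zero]
        ring
      · rw [cubicAct_expand (g₀ ^ 2) 0 (-1) 1 (-1) hcoeinv2]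
        simp only [map_neg, map_one, map_zero]
        ring
end

section
/- Over F_2, the three polynomials f_1 = y_1 + y_3, f_2 = y_1^2 y_2^2 + y_2^4 + y_1^2 y_2 y_3 + y_1 y_2^2 y_3 + y_1^2 y_3^2 + y_1 y_2 y_3^2 + y_2^2 y_3^2, and f_3 = y_1^4 y_2^2 + y_1^2 y_2^4 + y_1^4 y_2 y_3 + y_1 y_2^4 y_3 + y_1^4 y_3^2 + y_1^2 y_2^2 y_3^2 + y_2^4 y_3^2 + y_1^2 y_3^4 + y_1 y_2 y_3^4 + y_2^2 y_3^4 in F_2[y_1, y_2, y_3] have Jacobian determinant det(∂f_i/∂y_j) not equal to zero. -/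
open MvPolynomial

noncomputable def f1 : MvPolynomial (Fin 3) (ZMod 2) := X 0 + X 2

noncomputable def f2 : MvPolynomial (Fin 3) (ZMod 2) :=
  (X 0) ^ 2 * (X 1) ^ 2 + (X 1) ^ 4 + (X 0) ^ 2 * X 1 * X 2 + X 0 * (X 1) ^ 2 * X 2 +
    (X 0) ^ 2 * (X 2) ^ 2 + X 0 * X 1 * (X 2) ^ 2 + (X 1) ^ 2 * (X 2) ^ 2

noncomputable def f3 : MvPolynomial (Fin 3) (ZMod 2) :=
  (X 0) ^ 4 * (X 1) ^ 2 + (X 0) ^ 2 * (X 1) ^ 4 + (X 0) ^ 4 * X 1 * X 2 +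
    X 0 * (X 1) ^ 4 * X 2 + (X 0) ^ 4 * (X 2) ^ 2 + (X 0) ^ 2 * (X 1) ^ 2 * (X 2) ^ 2 +
    (X 1) ^ 4 * (X 2) ^ 2 + (X 0) ^ 2 * (X 2) ^ 4 + X 0 * X 1 * (X 2) ^ 4 +
    (X 1) ^ 2 * (X 2) ^ 4

/-- The Jacobian determinant `det(∂f_i/∂y_j)` of `f₁, f₂, f₃` over `F₂` is
nonzero. -/
theorem stmt9 :
    (Matrix.of fun i j : Fin 3 => MvPolynomial.pderiv j (![f1, f2, f3] i)).det ≠ 0 := by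
  intro h
  have h2 := congrArg (MvPolynomial.eval₂Hom (algebraMap (ZMod 2) (Polynomial (ZMod 2)))
      ![Polynomial.X, Polynomial.X ^ 2, 1]) h
  rw [map_zero, RingHom.map_det] at h2
  have h3 : ((Polynomial.X : Polynomial (ZMod 2)) ^ 11 + Polynomial.X ^ 8 +
      Polynomial.X ^ 7 + Polynomial.X ^ 4) = 0 := by
    rw [← h2, Matrix.det_fin_three]
    simp [f1, f2, f3, Matrix.map_apply, pderiv_X, Pi.single_apply, Fin.ext_iff]
    ring_nf
    reduce_mod_char
  have h4 := congrArg (fun p => Polynomial.coeff p 11) h3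
  simp [Polynomial.coeff_X_pow] at h4
end
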